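/- Combinatorial entropy bound used in the block estimates: for M ∈ ℕ, η ∈ (0,1), and constants c, c₈ > 0, if c is sufficiently large (depending only on η and c₈) then ∑_{j ≥ ηM} C(M,j)·e^{-jc|log μ|/2}·e^{c₈·j·log(c|log μ|/(ημ))} ≤ C'·e^{-ηkμ/8} for all sufficiently small μ > 0, where k = M·c|log μ|/μ and C(M,j) is the binomial coefficient. -/

import Mathlib

/-!
Write `L = c |log μ|`. For `μ < e⁻¹` and `c` large, `c₈ log (L / (η μ)) ≤ L / 4`, so the `j`-th
term is at most `C(M, j) e^{-j L / 4} ≤ C(M, j) e^{-η M L / 4}`. Summing the binomial coefficients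
costs at most `2^M`, which half of the exponential decay absorbs once `η L ≥ 8 log 2`;
the other half is the claimed `e^{-η k μ / 8} = e^{-η M L / 8}`.
-/

open Real Filter Finset

theorem Nat.sum_choose_le_two_pow (M : ℕ) (s : Finset ℕ) : ∑ j ∈ s, M.choose j ≤ 2 ^ M := by
  rw [← Nat.sum_range_choose]
  refine sum_le_sum_of_ne_zero fun j _ hj => mem_range.2 (Nat.lt_succ_of_le ?_)
  by_contra! h
  exact hj (Nat.choose_eq_zero_of_lt h)

theorem Real.two_pow_mul_exp_neg_two_mul_le {b : ℝ} (hb : log 2 ≤ b) (M : ℕ) :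
    (2 : ℝ) ^ M * exp (-(2 * (M * b))) ≤ exp (-(M * b)) := by
  have h2M : (2 : ℝ) ^ M ≤ exp (M * b) := by
    rw [← exp_log (two_pos : (0 : ℝ) < 2), ← exp_nat_mul]
    gcongr
  calc (2 : ℝ) ^ M * exp (-(2 * (M * b))) ≤ exp (M * b) * exp (-(2 * (M * b))) := by gcongr
    _ = exp (-(M * b)) := by rw [← exp_add]; ring_nf

theorem eventually_large_block_constant {η c₈ : ℝ} (hη : 0 < η) (hc₈ : 0 < c₈) :
    ∀ᶠ c in atTop, 0 < c ∧ 16 * c₈ ≤ c ∧ c₈ * log (c / η) ≤ c / 8 ∧ 8 * log 2 ≤ η * c := by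
  have hlog : ∀ᶠ c in atTop, ‖log (c / η)‖ ≤ η / (8 * c₈) * ‖c / η‖ :=
    (tendsto_id.atTop_div_const hη).eventually (isLittleO_log_id_atTop.bound (by positivity))
  filter_upwards [eventually_gt_atTop 0, eventually_ge_atTop (16 * c₈),
    eventually_ge_atTop (8 * log 2 / η), hlog] with c hc h16 h8 hlog
  refine ⟨hc, h16, ?_, (div_le_iff₀' hη).1 h8⟩
  rw [Real.norm_eq_abs, Real.norm_of_nonneg (div_pos hc hη).le] at hlog
  calc c₈ * log (c / η) ≤ c₈ * (η / (8 * c₈) * (c / η)) :=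
        mul_le_mul_of_nonneg_left ((le_abs_self _).trans hlog) hc₈.le
    _ = c / 8 := by field_simp

theorem mul_log_div_le_quarter {η c c₈ μ : ℝ} (hη : 0 < η) (hc : 0 < c) (hc₈ : 0 ≤ c₈)
    (h16 : 16 * c₈ ≤ c) (hlog : c₈ * log (c / η) ≤ c / 8) (hμ : 0 < μ) (hμe : log μ ≤ -1) :
    c₈ * log (c * |log μ| / (η * μ)) ≤ c * |log μ| / 4 := by
  rw [abs_of_neg (by linarith)]
  set t := -log μ
  have ht : 1 ≤ t := by linarith
  have ht0 : 0 < t := by linarith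
  have hsplit : log (c * t / (η * μ)) = log (c / η) + log t + t := by
    rw [show c * t / (η * μ) = c / η * t / μ by field_simp, log_div (by positivity) hμ.ne',
      log_mul (div_pos hc hη).ne' ht0.ne']
    ring
  have hlogt : log t ≤ t := (log_le_sub_one_of_pos ht0).trans (by linarith)
  rw [hsplit]
  nlinarith [mul_le_mul_of_nonneg_left hlogt hc₈]

theorem block_entropy_bound_general
    (η c₈ : ℝ) (hη : 0 < η) (hc₈ : 0 < c₈) :
    ∃ c₀ : ℝ, ∀ c : ℝ, c₀ ≤ c →
      ∃ C' : ℝ, 0 < C' ∧ ∃ μ₀ : ℝ, 0 < μ₀ ∧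
        ∀ μ : ℝ, 0 < μ → μ < μ₀ → ∀ M : ℕ,
          ∑ j ∈ Finset.Icc ⌈η * (M : ℝ)⌉₊ M,
              (M.choose j : ℝ) * Real.exp (-((j : ℝ) * c * |Real.log μ|) / 2) *
                Real.exp (c₈ * (j : ℝ) * Real.log (c * |Real.log μ| / (η * μ)))
            ≤ C' * Real.exp (-(η * ((M : ℝ) * c * |Real.log μ| / μ) * μ) / 8) := by
  obtain ⟨c₀, hc₀⟩ := (eventually_large_block_constant hη hc₈).exists_forall_of_atTop
  refine ⟨c₀, fun c hc => ⟨1, one_pos, exp (-1), exp_pos _, fun μ hμ hμ₀ M => ?_⟩⟩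
  obtain ⟨hcpos, h16, hlog, h8⟩ := hc₀ c hc
  have hμe : log μ ≤ -1 := by simpa using (log_lt_log hμ hμ₀).le
  set L := c * |log μ|
  have hcL : c ≤ L := le_mul_of_one_le_right hcpos.le (by rw [abs_of_neg (by linarith)]; linarith)
  have hkey := mul_log_div_le_quarter hη hcpos hc₈.le h16 hlog hμ hμe
  have hterm : ∀ j ∈ Icc ⌈η * (M : ℝ)⌉₊ M,
      (M.choose j : ℝ) * exp (-(j * c * |log μ|) / 2) * exp (c₈ * j * log (L / (η * μ)))
        ≤ M.choose j * exp (-(2 * (M * (η * L / 8)))) := by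
    intro j hj
    have hjM : η * M ≤ j := Nat.ceil_le.1 (mem_Icc.1 hj).1
    rw [mul_assoc, ← exp_add]
    gcongr
    nlinarith [mul_le_mul_of_nonneg_left hkey (Nat.cast_nonneg j : (0 : ℝ) ≤ j),
      mul_le_mul_of_nonneg_right hjM (hcpos.le.trans hcL)]
  calc _ ≤ ∑ j ∈ Icc ⌈η * (M : ℝ)⌉₊ M, (M.choose j : ℝ) * exp (-(2 * (M * (η * L / 8)))) :=
        sum_le_sum hterm
    _ ≤ 2 ^ M * exp (-(2 * (M * (η * L / 8)))) := by
        rw [← sum_mul]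
        gcongr
        exact_mod_cast Nat.sum_choose_le_two_pow M _
    _ ≤ exp (-(M * (η * L / 8))) :=
        two_pow_mul_exp_neg_two_mul_le (by nlinarith [mul_le_mul_of_nonneg_left hcL hη.le]) M
    _ = _ := by rw [one_mul]; congr 1; field_simp; ring

/-- combinatorial entropy bound for the block estimates: for
`η ∈ (0,1)` and `c₈ > 0`, if `c` is sufficiently large (depending only on `η, c₈`)
then for all sufficiently small `μ > 0` and all `M`,
`∑_{j ≥ ηM} C(M,j) e^{-jc|log μ|/2} e^{c₈ j log(c|log μ|/(ημ))} ≤ C' e^{-ηkμ/8}`,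
where `k = M·c|log μ|/μ`. -/
theorem block_entropy_bound
    (η c₈ : ℝ) (hη : 0 < η) (hη1 : η < 1) (hc₈ : 0 < c₈) :
    ∃ c₀ : ℝ, ∀ c : ℝ, c₀ ≤ c →
      ∃ C' : ℝ, 0 < C' ∧ ∃ μ₀ : ℝ, 0 < μ₀ ∧
        ∀ μ : ℝ, 0 < μ → μ < μ₀ → ∀ M : ℕ,
          ∑ j ∈ Finset.Icc ⌈η * (M : ℝ)⌉₊ M,
              (M.choose j : ℝ) * Real.exp (-((j : ℝ) * c * |Real.log μ|) / 2) *
                Real.exp (c₈ * (j : ℝ) * Real.log (c * |Real.log μ| / (η * μ)))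
            ≤ C' * Real.exp (-(η * ((M : ℝ) * c * |Real.log μ| / μ) * μ) / 8) :=
  block_entropy_bound_general η c₈ hη hc₈
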